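/- Let T₂, M, T₁ be abelian groups, and for an abelian group G write G^∧ = Hom(G, ℚ/ℤ). Let ∂ : T₂ → M and i : M → T₁ be homomorphisms with image(∂) = ker(i). Let λ : M → M^∧ be an injective homomorphism which is symmetric, i.e. λ(x)(y) = λ(y)(x) for all x, y ∈ M; let θ₂ : T₂ → T₁^∧ be a surjective homomorphism satisfying λ(∂(w))(y) = θ₂(w)(i(y)) for all w ∈ T₂ and y ∈ M; and assume that every μ ∈ M^∧ with μ∘∂ = 0 equals ν∘i for some ν ∈ T₁^∧. Then P := ker(i) is a metaboliser of the pairing (x,y) ↦ λ(x)(y), that is, P = P^⊥, where P^⊥ := { y ∈ M : λ(x)(y) = 0 for all x ∈ P }. -/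
import Mathlib


/-- algebraic content of Proposition 2.3 / Lemma 2.4.
Given abelian groups `T₂, M, T₁`, writing `G^∧ = Hom(G, ℚ/ℤ)`, homomorphisms `d : T₂ → M` and
`i : M → T₁` with `im d = ker i`, an injective symmetric `lam : M → M^∧`, a surjective
`θ₂ : T₂ → T₁^∧` with `lam(d w)(y) = θ₂(w)(i y)`, and such that every `μ ∈ M^∧` vanishing on
`im d` factors through `i`, the subgroup `P = ker i` is a metaboliser: `P = P^⊥`. -/
theorem statement2 {T₂ M T₁ : Type}
    [AddCommGroup T₂] [AddCommGroup M] [AddCommGroup T₁]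
    (d : T₂ →+ M) (i : M →+ T₁)
    (hexact : ∀ y : M, i y = 0 ↔ ∃ w : T₂, d w = y)
    (lam : M →+ (M →+ AddCircle (1 : ℚ)))
    (hlam_inj : Function.Injective lam)
    (hlam_symm : ∀ x y : M, lam x y = lam y x)
    (θ₂ : T₂ →+ (T₁ →+ AddCircle (1 : ℚ)))
    (hθ₂_surj : Function.Surjective θ₂)
    (hcomm : ∀ (w : T₂) (y : M), lam (d w) y = θ₂ w (i y))
    (hlift : ∀ μ : M →+ AddCircle (1 : ℚ), (∀ w : T₂, μ (d w) = 0) →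
      ∃ ν : T₁ →+ AddCircle (1 : ℚ), ∀ y : M, μ y = ν (i y)) :
    ∀ y : M, i y = 0 ↔ (∀ x : M, i x = 0 → lam x y = 0) := by
  intro y
  constructor
  · intro hy x hx
    obtain ⟨w, hw⟩ := (hexact y).mp hy
    rw [hlam_symm, ← hw, hcomm, hx, map_zero]
  · intro h
    have hvan : ∀ w : T₂, lam y (d w) = 0 := by
      intro w
      rw [← hlam_symm]
      exact h (d w) ((hexact (d w)).mpr ⟨w, rfl⟩)
    obtain ⟨ν, hν⟩ := hlift (lam y) hvan
    obtain ⟨w, hw⟩ := hθ₂_surj ν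
    have : lam y = lam (d w) := by
      ext t
      rw [hν t, ← hw, ← hcomm]
    have := hlam_inj this
    exact (hexact y).mpr ⟨w, this.symm⟩
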